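/- Let X be a compact Hausdorff space and ∗ a continuous t-norm. A functional I : C(X,[0,1]) → [0,1] satisfies (1) I(1_X) = 1, (2) I(φ ∨ ψ) = I(φ) ∨ I(ψ) for all comonotone φ, ψ, and (3) I(c ∗ φ) = c ∗ I(φ) for all c ∈ [0,1], if and only if there exists a unique upper-semicontinuous normed capacity ν on X such that I(φ) = max{ν(φ⁻¹([t,1])) ∗ t : t ∈ [0,1]} for all φ ∈ C(X,[0,1]). In particular, monotonicity of I need not be assumed. -/

import Mathlib

/-!
The capacity is forced: `ν F` must be the infimum of `J u` over the `u` equal to `1` on `F`.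
Comonotone maxitivity makes `J` monotone along comonotone pairs, and every function built from
`φ` by a monotone map of `[0,1]` is comonotone with `φ`; this replaces the missing monotonicity.
Testing `J φ` against `c ∗ r(φ) ≤ φ`, where the ramp `r` rises from `c` to `t`, and letting
`c ↑ t` gives `ν {φ ≥ t} ∗ t ≤ J φ`. Conversely `φ` is dominated by a staircase
`maxᵢ tᵢ ∗ rᵢ(φ)` of comonotone pieces whose ramps `rᵢ` vanish below `sᵢ`, with `tᵢ - sᵢ` small,
so `J φ` is at most `ν {φ ≥ sᵢ} ∗ tᵢ`; the supremum over `t` is attained because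
`t ↦ ν {φ ≥ t} ∗ t` is upper semicontinuous on the compact `[0,1]`. Uniqueness follows by
testing a competing capacity on Urysohn functions, and the converse from the fact that
superlevel sets of comonotone functions are nested.
-/

open unitInterval

noncomputable section

/-- Two `[0,1]`-valued functions are comonotone. -/
def Comonotone {X : Type*} (f g : X → I) : Prop :=
  ∀ x y : X, 0 ≤ ((f x : ℝ) - (f y : ℝ)) * ((g x : ℝ) - (g y : ℝ))
/-- Pointwise max of a constant with a continuous `[0,1]`-valued map. -/
def cSup {X : Type*} [TopologicalSpace X] (c : I) (f : C(X, I)) : C(X, I) :=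
  ⟨fun x => c ⊔ f x, continuous_const.max f.continuous⟩

/-- Pointwise min of a constant with a continuous `[0,1]`-valued map. -/
def cInf {X : Type*} [TopologicalSpace X] (c : I) (f : C(X, I)) : C(X, I) :=
  ⟨fun x => c ⊓ f x, continuous_const.min f.continuous⟩

/-- Pointwise product of a constant with a continuous `[0,1]`-valued map. -/
def cMul {X : Type*} [TopologicalSpace X] (c : I) (f : C(X, I)) : C(X, I) :=
  ⟨fun x => c * f x,
    Continuous.subtype_mk (continuous_const.mul (continuous_subtype_val.comp f.continuous)) _⟩

/-- Pointwise max of two continuous `[0,1]`-valued maps. -/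
def fSup {X : Type*} [TopologicalSpace X] (f g : C(X, I)) : C(X, I) :=
  ⟨fun x => f x ⊔ g x, f.continuous.max g.continuous⟩
/-- A continuous t-norm on `[0,1]`. -/
structure Tnorm where
  op : I → I → I
  cont : Continuous fun p : I × I => op p.1 p.2
  assoc : ∀ a b c, op (op a b) c = op a (op b c)
  comm : ∀ a b, op a b = op b a
  mono : ∀ ⦃a b c d⦄, a ≤ b → c ≤ d → op a c ≤ op b d
  op_one : ∀ s, op s 1 = s
/-- The map `x ↦ c ∗ f x` for a t-norm `∗`. -/
def tMul {X : Type*} [TopologicalSpace X] (T : Tnorm) (c : I) (f : C(X, I)) : C(X, I) :=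
  ⟨fun x => T.op c (f x), T.cont.comp (continuous_const.prodMk f.continuous)⟩
/-- An upper-semicontinuous normed capacity on a topological space,
defined on the closed subsets. -/
structure Capacity (X : Type*) [TopologicalSpace X] where
  ν : {F : Set X // IsClosed F} → I
  normed : ν ⟨Set.univ, isClosed_univ⟩ = 1
  empty : ν ⟨∅, isClosed_empty⟩ = 0
  mono : ∀ F G : {F : Set X // IsClosed F}, F.1 ⊆ G.1 → ν F ≤ ν G
  usc : ∀ (F : {F : Set X // IsClosed F}) (a : I), ν F < a →
    ∃ O : Set X, IsOpen O ∧ F.1 ⊆ O ∧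
      ∀ B : {F : Set X // IsClosed F}, IsCompact B.1 → B.1 ⊆ O → ν B < a

/-- The (closed) superlevel set `φ⁻¹([t,1])` of a continuous `[0,1]`-valued map. -/
def superLevel {X : Type*} [TopologicalSpace X] (f : C(X, I)) (t : I) :
    {F : Set X // IsClosed F} :=
  ⟨{x | t ≤ f x}, isClosed_le continuous_const f.continuous⟩

open Filter Topology

namespace Tnorm

variable (T : Tnorm)

lemma one_op (a : I) : T.op 1 a = a := by rw [T.comm, T.op_one]

lemma op_le_left (a b : I) : T.op a b ≤ a := (T.mono le_rfl le_one').trans_eq (T.op_one a)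

lemma op_le_right (a b : I) : T.op a b ≤ b := T.comm a b ▸ T.op_le_left b a

lemma op_zero (a : I) : T.op a 0 = 0 := le_antisymm (T.op_le_right a 0) nonneg'

lemma zero_op (a : I) : T.op 0 a = 0 := by rw [T.comm, T.op_zero]

lemma continuous_op_left (a : I) : Continuous fun b => T.op a b :=
  T.cont.comp (continuous_const.prodMk continuous_id)

lemma continuous_op_right (b : I) : Continuous fun a => T.op a b :=
  T.cont.comp (continuous_id.prodMk continuous_const)

lemma upperSemicontinuous_op {α : Type*} [TopologicalSpace α] {f g : α → I}
    (hf : UpperSemicontinuous f) (hg : Continuous g) :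
    UpperSemicontinuous fun x => T.op (f x) (g x) := by
  intro x y hy
  obtain ⟨b, hby, hfb⟩ : ∃ b, T.op b (g x) < y ∧ ∀ᶠ x' in 𝓝 x, f x' ≤ b := by
    rcases le_one'.eq_or_lt with h1 | h1
    · exact ⟨1, h1 ▸ hy, Eventually.of_forall fun _ => le_one'⟩
    · have hy' : ∀ᶠ b in 𝓝[>] f x, T.op b (g x) < y :=
        ((T.continuous_op_right (g x)).continuousAt.eventually_lt continuousAt_const hy).filter_mono
          nhdsWithin_le_nhds
      have : (𝓝[>] f x).NeBot := nhdsGT_neBot_of_exists_gt ⟨1, h1⟩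
      obtain ⟨b, hby, hfb⟩ := (hy'.and self_mem_nhdsWithin).exists
      exact ⟨b, hby, (hf x b hfb).mono fun _ => le_of_lt⟩
  have hgy : ∀ᶠ x' in 𝓝 x, T.op b (g x') < y :=
    ((T.continuous_op_left b).comp hg).continuousAt.eventually_lt continuousAt_const hby
  filter_upwards [hfb, hgy] with x' h1 h2 using (T.mono h1 le_rfl).trans_lt h2

lemma exists_op_le_op_add {ε : ℝ} (hε : 0 < ε) :
    ∃ δ > 0, ∀ a s t : I, (t : ℝ) < s + δ → (T.op a t : ℝ) ≤ T.op a s + ε := by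
  obtain ⟨δ, hδ, hT⟩ := Metric.uniformContinuous_iff.1
    (CompactSpace.uniformContinuous_of_continuous T.cont) ε hε
  refine ⟨δ, hδ, fun a s t hts => ?_⟩
  rcases le_total t s with hle | hle
  · have : T.op a t ≤ T.op a s := T.mono le_rfl hle
    linarith [Subtype.coe_le_coe.2 this]
  · have hdist : dist (a, t) (a, s) < δ := by
      rw [Prod.dist_eq, dist_self, Subtype.dist_eq, Real.dist_eq,
        abs_of_nonneg (sub_nonneg.2 (Subtype.coe_le_coe.2 hle))]
      exact max_lt hδ (by linarith)
    have := hT hdist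
    rw [Subtype.dist_eq, Real.dist_eq] at this
    linarith [(abs_lt.1 this).2]

end Tnorm

def projI (r : ℝ) : I := Set.projIcc 0 1 zero_le_one r

lemma projI_eq_zero {r : ℝ} (h : r ≤ 0) : projI r = 0 := Set.projIcc_of_le_left _ h

lemma projI_eq_one {r : ℝ} (h : 1 ≤ r) : projI r = 1 := Set.projIcc_of_right_le _ h

lemma projI_le {r : ℝ} {s : I} (h : r ≤ s) : projI r ≤ s :=
  (Set.monotone_projIcc _ h).trans_eq (Set.projIcc_val _ s)

lemma le_projI {r : ℝ} {s : I} (h : (s : ℝ) ≤ r) : s ≤ projI r :=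
  (Set.projIcc_val _ s).symm.trans_le (Set.monotone_projIcc _ h)

def ramp (a b : ℝ) : C(I, I) :=
  ⟨fun s => projI ((s - a) / (b - a)),
    continuous_projIcc.comp ((continuous_subtype_val.sub continuous_const).div_const _)⟩

section Ramp

variable {a b : ℝ} {s : I}

lemma ramp_eq_zero (hab : a ≤ b) (hs : (s : ℝ) ≤ a) : ramp a b s = 0 :=
  projI_eq_zero (div_nonpos_of_nonpos_of_nonneg (by linarith) (by linarith))

lemma ramp_eq_one (hab : a < b) (hs : b ≤ s) : ramp a b s = 1 :=
  projI_eq_one ((one_le_div (by linarith)).2 (by linarith))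

lemma monotone_ramp (hab : a ≤ b) : Monotone (ramp a b) := fun _ _ hst =>
  Set.monotone_projIcc zero_le_one (div_le_div_of_nonneg_right
    (sub_le_sub_right (Subtype.coe_le_coe.2 hst) a) (sub_nonneg.2 hab))

lemma lt_of_ramp_ne_zero (hab : a ≤ b) (h : ramp a b s ≠ 0) : a < s :=
  lt_of_not_ge fun hs => h (ramp_eq_zero hab hs)

end Ramp

lemma ContinuousMap.monotone_sup' {α β ι : Type*} [TopologicalSpace α] [Preorder α]
    [TopologicalSpace β] [SemilatticeSup β] [ContinuousSup β] {s : Finset ι} (hs : s.Nonempty)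
    {m : ι → C(α, β)} (hm : ∀ i ∈ s, Monotone (m i)) : Monotone ⇑(s.sup' hs m) :=
  Finset.sup'_induction hs m (p := fun f : C(α, β) => Monotone f)
    (fun f hf g hg => by rw [ContinuousMap.coe_sup]; exact hf.sup hg) hm

lemma Tnorm.exists_le_op_ramp (T : Tnorm) {n : ℕ} (hn : 0 < n) (s : I) :
    ∃ i ∈ Finset.range (n + 1),
      s ≤ T.op (projI (((i : ℝ) + 1) / n)) (ramp (((i : ℝ) - 1) / n) ((i : ℝ) / n) s) := by
  have hn' : (0 : ℝ) < n := Nat.cast_pos.2 hn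
  have hs : 0 ≤ (s : ℝ) * n := mul_nonneg s.2.1 hn'.le
  refine ⟨⌊(s : ℝ) * n⌋₊, Finset.mem_range_succ_iff.2
    (Nat.floor_le_of_le (mul_le_of_le_one_left hn'.le s.2.2)), ?_⟩
  rw [ramp_eq_one (by gcongr; linarith) ((div_le_iff₀ hn').2 (Nat.floor_le hs)), T.op_one]
  exact le_projI ((le_div_iff₀ hn').2 (Nat.lt_floor_add_one _).le)

section Comonotone

variable {X : Type*} {f g : X → I}

lemma comonotone_of_lt_imp_le (h : ∀ x y, g x < g y → f x ≤ f y) : Comonotone f g := by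
  intro x y
  rcases lt_trichotomy (g x) (g y) with hxy | hxy | hxy
  · exact mul_nonneg_of_nonpos_of_nonpos (sub_nonpos.2 (h x y hxy)) (sub_nonpos.2 hxy.le)
  · simp [hxy]
  · exact mul_nonneg (sub_nonneg.2 (h y x hxy)) (sub_nonneg.2 hxy.le)

lemma Comonotone.le_of_lt (h : Comonotone f g) {x y : X} (hxy : g x < g y) : f x ≤ f y :=
  Subtype.coe_le_coe.1 <| sub_nonpos.1 <| nonpos_of_mul_nonneg_left (h x y) (sub_neg.2 hxy)

lemma comonotone_comp {m k : I → I} (hm : Monotone m) (hk : Monotone k) (φ : X → I) :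
    Comonotone (m ∘ φ) (k ∘ φ) :=
  comonotone_of_lt_imp_le fun _ _ h => hm (le_of_not_ge fun h' => h.not_ge (hk h'))

lemma comonotone_of_eq_one (h : ∀ x, f x ≠ 0 → g x = 1) : Comonotone f g :=
  comonotone_of_lt_imp_le fun x _ hxy => by
    by_cases hfx : f x = 0
    · exact hfx ▸ nonneg'
    · exact absurd (h x hfx) (hxy.trans_le le_one').ne

lemma Comonotone.setOf_le_subset_or (h : Comonotone f g) (t : I) :
    {x | t ≤ f x} ⊆ {x | t ≤ g x} ∨ {x | t ≤ g x} ⊆ {x | t ≤ f x} := by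
  refine or_iff_not_imp_left.2 fun hfg y hy => ?_
  obtain ⟨x, hxf, hxg⟩ := Set.not_subset.1 hfg
  exact le_trans hxf (h.le_of_lt ((not_le.1 hxg).trans_le hy))

end Comonotone

section Functional

variable {X : Type*} [TopologicalSpace X]

def ComonotoneMaxitive (J : C(X, I) → I) : Prop :=
  ∀ φ ψ : C(X, I), Comonotone ⇑φ ⇑ψ → J (fSup φ ψ) = J φ ⊔ J ψ

def TnormHomogeneous (T : Tnorm) (J : C(X, I) → I) : Prop :=
  ∀ (c : I) (φ : C(X, I)), J (tMul T c φ) = T.op c (J φ)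

variable {T : Tnorm} {J : C(X, I) → I}

lemma ComonotoneMaxitive.le_of_comonotone (hM : ComonotoneMaxitive J) {φ ψ : C(X, I)}
    (hc : Comonotone ⇑φ ⇑ψ) (hle : ∀ x, φ x ≤ ψ x) : J φ ≤ J ψ := by
  have : fSup φ ψ = ψ := ContinuousMap.ext fun x => sup_eq_right.2 (hle x)
  calc J φ ≤ J φ ⊔ J ψ := le_sup_left
    _ = J ψ := by rw [← hM φ ψ hc, this]

lemma ComonotoneMaxitive.map_sup'_comp (hM : ComonotoneMaxitive J) (φ : C(X, I)) {ι : Type*}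
    {s : Finset ι} (hs : s.Nonempty) {m : ι → C(I, I)} (hm : ∀ i ∈ s, Monotone (m i)) :
    J ((s.sup' hs m).comp φ) = s.sup' hs fun i => J ((m i).comp φ) := by
  induction hs using Finset.Nonempty.cons_induction with
  | singleton i => simp
  | cons i s hi hs ih =>
    have hm' : ∀ j ∈ s, Monotone (m j) := fun j hj => hm j (Finset.mem_cons_of_mem hj)
    rw [Finset.sup'_cons hs, Finset.sup'_cons hs, ← ih hm']
    exact hM ((m i).comp φ) ((s.sup' hs m).comp φ)
      (comonotone_comp (hm i (Finset.mem_cons_self i s)) (ContinuousMap.monotone_sup' hs hm') φ)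

lemma ComonotoneMaxitive.op_le_of_ramp (hM : ComonotoneMaxitive J) (hH : TnormHomogeneous T J)
    (u : C(X, I)) {c θ : I} (hcθ : c < θ) : T.op c (J ((ramp c θ).comp u)) ≤ J u := by
  rw [← hH]
  refine hM.le_of_comonotone ?_ fun x => ?_
  · exact comonotone_comp
      (fun _ _ h => T.mono le_rfl (monotone_ramp (Subtype.coe_le_coe.2 hcθ.le) h)) monotone_id u
  · change T.op c (ramp c θ (u x)) ≤ u x
    rcases le_total (u x) c with h | h
    · rw [show ramp c θ (u x) = 0 from ramp_eq_zero (Subtype.coe_le_coe.2 hcθ.le) h, T.op_zero]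
      exact nonneg'
    · exact (T.op_le_left _ _).trans h

end Functional

section InducedCapacity

variable {X : Type*} [TopologicalSpace X] {T : Tnorm} {J : C(X, I) → I}

def capacityOf (J : C(X, I) → I) (F : Set X) : I :=
  ⨅ (u : C(X, I)) (_ : ∀ x ∈ F, u x = 1), J u

lemma capacityOf_le {F : Set X} {u : C(X, I)} (hu : ∀ x ∈ F, u x = 1) : capacityOf J F ≤ J u :=
  iInf₂_le u hu

lemma le_capacityOf {F : Set X} {a : I} (h : ∀ u : C(X, I), (∀ x ∈ F, u x = 1) → a ≤ J u) :
    a ≤ capacityOf J F :=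
  le_iInf₂ h

lemma capacityOf_mono {F G : Set X} (h : F ⊆ G) : capacityOf J F ≤ capacityOf J G :=
  le_capacityOf fun _ hu => capacityOf_le fun x hx => hu x (h hx)

lemma ComonotoneMaxitive.apply_le_capacityOf (hM : ComonotoneMaxitive J) {F : Set X} {a : C(X, I)}
    (ha : ∀ x, a x ≠ 0 → x ∈ F) : J a ≤ capacityOf J F :=
  le_capacityOf fun u hu =>
    have hau : ∀ x, a x ≠ 0 → u x = 1 := fun x hx => hu x (ha x hx)
    hM.le_of_comonotone (comonotone_of_eq_one hau) fun x => by
      by_cases hx : a x = 0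
      · exact hx ▸ nonneg'
      · exact (hau x hx).symm ▸ le_one'

lemma ComonotoneMaxitive.op_capacityOf_le (hM : ComonotoneMaxitive J) (hH : TnormHomogeneous T J)
    (φ : C(X, I)) (t : I) : T.op (capacityOf J {x | t ≤ φ x}) t ≤ J φ := by
  set ν := capacityOf J {x | t ≤ φ x}
  have hlt : ∀ c < t, T.op ν c ≤ J φ := fun c hct =>
    calc T.op ν c = T.op c ν := T.comm _ _
      _ ≤ T.op c (J ((ramp c t).comp φ)) :=
        T.mono le_rfl (capacityOf_le fun x hx => ramp_eq_one (Subtype.coe_lt_coe.2 hct) hx)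
      _ ≤ J φ := hM.op_le_of_ramp hH φ hct
  rcases eq_or_ne t 0 with rfl | ht
  · rw [T.op_zero]
    exact nonneg'
  · have hcl : closure (Set.Iio t) ⊆ {c | T.op ν c ≤ J φ} :=
      (isClosed_le (T.continuous_op_left ν) continuous_const).closure_subset_iff.2 hlt
    rw [closure_Iio' ⟨0, pos_iff_ne_zero.2 ht⟩] at hcl
    exact hcl (le_refl t)

lemma ComonotoneMaxitive.exists_isOpen_capacityOf_lt (hM : ComonotoneMaxitive J)
    (hH : TnormHomogeneous T J) {F : Set X} {a : I} (h : capacityOf J F < a) :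
    ∃ O, IsOpen O ∧ F ⊆ O ∧ ∀ B ⊆ O, capacityOf J B < a := by
  obtain ⟨u, hu, hua⟩ : ∃ u : C(X, I), (∀ x ∈ F, u x = 1) ∧ J u < a := by
    simpa only [capacityOf, iInf_lt_iff, exists_prop] using h
  obtain ⟨c, hca, hc1⟩ : ∃ c, J u < T.op c a ∧ c < 1 := by
    have hev : ∀ᶠ c in 𝓝 (1 : I), J u < T.op c a :=
      continuousAt_const.eventually_lt (T.continuous_op_right a).continuousAt (by rwa [T.one_op])
    have : (𝓝[<] (1 : I)).NeBot := nhdsLT_neBot_of_exists_lt ⟨0, zero_lt_one⟩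
    have hev' : ∀ᶠ c in 𝓝[<] (1 : I), J u < T.op c a ∧ c < 1 :=
      (hev.filter_mono nhdsWithin_le_nhds).and self_mem_nhdsWithin
    exact hev'.exists
  obtain ⟨θ, hcθ, hθ1⟩ := exists_between hc1
  refine ⟨{x | θ < u x}, isOpen_lt continuous_const u.continuous,
    fun x hx => by simpa [hu x hx] using hθ1, fun B hB => ?_⟩
  have hψ : J ((ramp c θ).comp u) < a := lt_of_not_ge fun ha =>
    (hM.op_le_of_ramp hH u hcθ).not_gt (hca.trans_le (T.mono le_rfl ha))
  exact (capacityOf_le (u := (ramp c θ).comp u) fun x hx =>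
    ramp_eq_one (Subtype.coe_lt_coe.2 hcθ) (hB hx).le).trans_lt hψ

lemma ComonotoneMaxitive.exists_le_op_capacityOf (hM : ComonotoneMaxitive J)
    (hH : TnormHomogeneous T J) (φ : C(X, I)) {n : ℕ} (hn : 0 < n) :
    ∃ s t : I, (t : ℝ) ≤ s + 2 / n ∧ J φ ≤ T.op (capacityOf J {x | s ≤ φ x}) t := by
  set lo : ℕ → ℝ := fun i => ((i : ℝ) - 1) / n
  set up : ℕ → ℝ := fun i => ((i : ℝ) + 1) / n
  set r : ℕ → C(I, I) := fun i => ramp (lo i) ((i : ℝ) / n)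
  have hlo : ∀ i : ℕ, lo i ≤ (i : ℝ) / n := fun i =>
    div_le_div_of_nonneg_right (by linarith) (Nat.cast_nonneg n)
  have hr : ∀ i, Monotone (r i) := fun i => monotone_ramp (hlo i)
  set m : ℕ → C(I, I) := fun i => tMul T (projI (up i)) (r i)
  have hm : ∀ i ∈ Finset.range (n + 1), Monotone (m i) := fun i _ _ _ h => T.mono le_rfl (hr i h)
  have hJ : J φ ≤ J (((Finset.range (n + 1)).sup' Finset.nonempty_range_add_one m).comp φ) := by
    refine hM.le_of_comonotone
      (comonotone_comp monotone_id (ContinuousMap.monotone_sup' _ hm) φ) fun x => ?_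
    obtain ⟨i, hi, hle⟩ := T.exists_le_op_ramp hn (φ x)
    exact hle.trans (Finset.le_sup' m hi (φ x))
  rw [hM.map_sup'_comp φ _ hm] at hJ
  obtain ⟨i, -, hmax⟩ := Finset.exists_mem_eq_sup' Finset.nonempty_range_add_one
    fun i => J ((m i).comp φ)
  refine ⟨projI (lo i), projI (up i), ?_, ?_⟩
  · have := (le_abs_self _).trans (Set.abs_projIcc_sub_projIcc zero_le_one (c := up i) (d := lo i))
    have h2 : up i - lo i = 2 / n := by ring
    rw [h2, abs_of_nonneg (by positivity)] at this
    exact sub_le_iff_le_add'.1 this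
  · calc J φ ≤ J ((m i).comp φ) := hJ.trans_eq hmax
      _ = T.op (projI (up i)) (J ((r i).comp φ)) := hH _ ((r i).comp φ)
      _ ≤ T.op (projI (up i)) (capacityOf J {x | projI (lo i) ≤ φ x}) :=
        T.mono le_rfl (hM.apply_le_capacityOf fun x hx =>
          projI_le (lt_of_ramp_ne_zero (hlo i) hx).le)
      _ = _ := T.comm _ _

end InducedCapacity

namespace Capacity

variable {X : Type*} [TopologicalSpace X]

lemma ext {ν₁ ν₂ : Capacity X} (h : ν₁.ν = ν₂.ν) : ν₁ = ν₂ := by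
  cases ν₁; cases ν₂; congr

variable [CompactSpace X] (ν : Capacity X) (φ : C(X, I))

lemma upperSemicontinuous_superLevel : UpperSemicontinuous fun t => ν.ν (superLevel φ t) := by
  intro t₀ b hb
  obtain ⟨O, hO, hsub, hlt⟩ := ν.usc _ b hb
  have hK : ∀ x ∈ Oᶜ, ∀ᶠ p in 𝓝 (t₀, x), φ p.2 < p.1 := fun x hx =>
    (φ.continuous.comp continuous_snd).continuousAt.eventually_lt continuous_fst.continuousAt
      (lt_of_not_ge fun h => hx (hsub h))
  filter_upwards [hO.isClosed_compl.isCompact.eventually_forall_of_forall_eventually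
    (P := fun t x => φ x < t) hK] with t ht
  exact hlt _ (superLevel φ t).2.isCompact fun x hx => not_not.1 fun hxO => (ht x hxO).not_ge hx

lemma exists_forall_op_le (T : Tnorm) : ∃ t₀ : I, ∀ t : I,
    T.op (ν.ν (superLevel φ t)) t ≤ T.op (ν.ν (superLevel φ t₀)) t₀ := by
  obtain ⟨t₀, -, ht₀⟩ := ((T.upperSemicontinuous_op (ν.upperSemicontinuous_superLevel φ)
    continuous_id).upperSemicontinuousOn Set.univ).exists_isMaxOn Set.univ_nonempty isCompact_univ
  exact ⟨t₀, fun t => ht₀ (Set.mem_univ t)⟩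

end Capacity

section Representation

variable {X : Type*} [TopologicalSpace X] {T : Tnorm} {J : C(X, I) → I}

def Represents (T : Tnorm) (ν : Capacity X) (J : C(X, I) → I) : Prop :=
  ∀ φ : C(X, I), IsGreatest {y | ∃ t : I, y = T.op (ν.ν (superLevel φ t)) t} (J φ)

def inducedCapacity (hN : J (ContinuousMap.const X 1) = 1) (hM : ComonotoneMaxitive J)
    (hH : TnormHomogeneous T J) : Capacity X where
  ν F := capacityOf J F.1
  normed := le_antisymm le_one' <| le_capacityOf fun _ hu =>
    (hN.symm.trans (congrArg J (ContinuousMap.ext fun x => (hu x (Set.mem_univ x)).symm))).le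
  empty := le_antisymm
    ((capacityOf_le (u := tMul T 0 (ContinuousMap.const X 0)) fun _ => False.elim).trans_eq
      ((hH _ _).trans (T.zero_op _))) nonneg'
  mono _ _ := capacityOf_mono
  usc _ _ h :=
    let ⟨O, hO, hFO, hB⟩ := hM.exists_isOpen_capacityOf_lt hH h
    ⟨O, hO, hFO, fun B _ hBO => hB B.1 hBO⟩

lemma represents_inducedCapacity [CompactSpace X] (hN : J (ContinuousMap.const X 1) = 1)
    (hM : ComonotoneMaxitive J) (hH : TnormHomogeneous T J) :
    Represents T (inducedCapacity hN hM hH) J := by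
  intro φ
  set ν := inducedCapacity hN hM hH
  have hle : ∀ t, T.op (ν.ν (superLevel φ t)) t ≤ J φ := hM.op_capacityOf_le hH φ
  obtain ⟨t₀, ht₀⟩ := ν.exists_forall_op_le φ T
  suffices h : (J φ : ℝ) ≤ T.op (ν.ν (superLevel φ t₀)) t₀ from
    ⟨⟨t₀, le_antisymm (Subtype.coe_le_coe.1 h) (hle t₀)⟩, fun _ ⟨t, ht⟩ => ht ▸ hle t⟩
  refine le_of_forall_pos_le_add fun ε hε => ?_
  obtain ⟨δ, hδ, hT⟩ := T.exists_op_le_op_add hε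
  obtain ⟨n, hn⟩ := exists_nat_gt (2 / δ)
  have hn0 : (0 : ℝ) < n := (div_pos two_pos hδ).trans hn
  have h2n : 2 / (n : ℝ) < δ := (div_lt_comm₀ hδ hn0).1 hn
  obtain ⟨s, t, hst, hJ⟩ := hM.exists_le_op_capacityOf hH φ (Nat.cast_pos.1 hn0)
  calc (J φ : ℝ) ≤ T.op (ν.ν (superLevel φ s)) t := Subtype.coe_le_coe.2 hJ
    _ ≤ T.op (ν.ν (superLevel φ s)) s + ε := hT _ _ _ (by linarith)
    _ ≤ T.op (ν.ν (superLevel φ t₀)) t₀ + ε := by gcongr; exact Subtype.coe_le_coe.2 (ht₀ s)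

end Representation

namespace Represents

variable {X : Type*} [TopologicalSpace X] {T : Tnorm} {J : C(X, I) → I} {ν : Capacity X}

lemma le_apply (hJ : Represents T ν J) (φ : C(X, I)) (t : I) :
    T.op (ν.ν (superLevel φ t)) t ≤ J φ :=
  (hJ φ).2 ⟨t, rfl⟩

lemma exists_eq (hJ : Represents T ν J) (φ : C(X, I)) :
    ∃ t, J φ = T.op (ν.ν (superLevel φ t)) t :=
  (hJ φ).1

lemma apply_le_of_superLevel_subset (hJ : Represents T ν J) {φ ψ : C(X, I)}
    (h : ∀ t x, t ≤ φ x → t ≤ ψ x) : J φ ≤ J ψ := by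
  obtain ⟨t, ht⟩ := hJ.exists_eq φ
  rw [ht]
  exact (T.mono (ν.mono (superLevel φ t) (superLevel ψ t) (h t)) le_rfl).trans (hJ.le_apply ψ t)

lemma map_one (hJ : Represents T ν J) : J (ContinuousMap.const X 1) = 1 := by
  have h := hJ.le_apply (ContinuousMap.const X 1) 1
  have huniv : superLevel (ContinuousMap.const X 1) 1 = ⟨Set.univ, isClosed_univ⟩ :=
    Subtype.ext (Set.eq_univ_of_forall fun _ => (le_rfl : (1 : I) ≤ 1))
  rw [huniv, ν.normed, T.op_one] at h
  exact le_antisymm le_one' h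

lemma comonotoneMaxitive (hJ : Represents T ν J) : ComonotoneMaxitive J := by
  intro φ ψ hc
  refine le_antisymm ?_ <| sup_le
    (hJ.apply_le_of_superLevel_subset fun _ _ hx => le_sup_of_le_left hx)
    (hJ.apply_le_of_superLevel_subset fun _ _ hx => le_sup_of_le_right hx)
  obtain ⟨t, ht⟩ := hJ.exists_eq (fSup φ ψ)
  rw [ht]
  rcases hc.setOf_le_subset_or t with h | h
  · refine le_sup_of_le_right ((T.mono (ν.mono _ (superLevel ψ t) fun x hx => ?_) le_rfl).trans
      (hJ.le_apply ψ t))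
    rcases le_sup_iff.1 (show t ≤ φ x ⊔ ψ x from hx) with hφ | hψ
    exacts [h hφ, hψ]
  · refine le_sup_of_le_left ((T.mono (ν.mono _ (superLevel φ t) fun x hx => ?_) le_rfl).trans
      (hJ.le_apply φ t))
    rcases le_sup_iff.1 (show t ≤ φ x ⊔ ψ x from hx) with hφ | hψ
    exacts [hφ, h hψ]

lemma tnormHomogeneous (hJ : Represents T ν J) : TnormHomogeneous T J := by
  intro c φ
  apply le_antisymm
  · obtain ⟨t, ht⟩ := hJ.exists_eq (tMul T c φ)
    rw [ht]
    by_cases hK : ∃ s, t ≤ T.op c s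
    · -- the least `s₀` with `t ≤ c ∗ s₀` satisfies `{c ∗ φ ≥ t} ⊆ {φ ≥ s₀}`
      obtain ⟨s₀, hs₀, hmin⟩ :=
        (isClosed_le continuous_const (T.continuous_op_left c)).isCompact.exists_isLeast hK
      calc T.op (ν.ν (superLevel (tMul T c φ) t)) t
          ≤ T.op (ν.ν (superLevel φ s₀)) (T.op c s₀) := T.mono (ν.mono _ _ fun _ hx => hmin hx) hs₀
        _ = T.op c (T.op (ν.ν (superLevel φ s₀)) s₀) := by rw [← T.assoc, T.comm _ c, T.assoc]
        _ ≤ T.op c (J φ) := T.mono le_rfl (hJ.le_apply φ s₀)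
    · have hempty : superLevel (tMul T c φ) t = ⟨∅, isClosed_empty⟩ :=
        Subtype.ext (Set.eq_empty_of_forall_notMem fun x hx => hK ⟨φ x, hx⟩)
      rw [hempty, ν.empty, T.zero_op]
      exact nonneg'
  · obtain ⟨s, hs⟩ := hJ.exists_eq φ
    rw [hs]
    calc T.op c (T.op (ν.ν (superLevel φ s)) s) = T.op (ν.ν (superLevel φ s)) (T.op c s) := by
          rw [← T.assoc, T.comm c, T.assoc]
      _ ≤ T.op (ν.ν (superLevel (tMul T c φ) (T.op c s))) (T.op c s) :=
          T.mono (ν.mono _ _ fun _ hx => T.mono le_rfl hx) le_rfl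
      _ ≤ J (tMul T c φ) := hJ.le_apply _ _

lemma ν_eq_capacityOf [CompactSpace X] [T2Space X] (hJ : Represents T ν J)
    (F : {F : Set X // IsClosed F}) : ν.ν F = capacityOf J F.1 := by
  refine le_antisymm (le_capacityOf fun u hu => ?_) (le_of_not_gt fun hlt => ?_)
  · calc ν.ν F ≤ ν.ν (superLevel u 1) := ν.mono _ _ fun x hx => (hu x hx).ge
      _ = T.op (ν.ν (superLevel u 1)) 1 := (T.op_one _).symm
      _ ≤ J u := hJ.le_apply u 1
  · -- an Urysohn function `u` for `F ⊆ O` has `capacityOf J F ≤ J u < capacityOf J F`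
    obtain ⟨O, hO, hFO, hB⟩ := ν.usc F _ hlt
    obtain ⟨g, hg0, hg1, hg01⟩ := exists_continuous_zero_one_of_isClosed hO.isClosed_compl F.2
      (Set.disjoint_compl_left_iff_subset.2 hFO)
    let u : C(X, I) := ⟨fun x => ⟨g x, hg01 x⟩, g.continuous.subtype_mk _⟩
    obtain ⟨t, ht⟩ := hJ.exists_eq u
    have hu : J u < capacityOf J F.1 := by
      rw [ht]
      rcases eq_or_ne t 0 with rfl | ht0
      · rw [T.op_zero]
        exact nonneg'.trans_lt hlt
      · refine (T.op_le_left _ _).trans_lt (hB _ (superLevel u t).2.isCompact fun x hx => ?_)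
        by_contra hxO
        exact ht0 (le_antisymm (hx.trans_eq (Subtype.ext (hg0 hxO))) nonneg')
    exact hu.not_ge (capacityOf_le fun x hx => Subtype.ext (hg1 hx))

end Represents

theorem tnormed_integral_characterization_general {X : Type*} [TopologicalSpace X] [CompactSpace X]
    [T2Space X] (T : Tnorm) (J : C(X, I) → I) :
    (J (ContinuousMap.const X 1) = 1 ∧
     (∀ φ ψ : C(X, I), Comonotone (⇑φ) (⇑ψ) → J (fSup φ ψ) = J φ ⊔ J ψ) ∧
     (∀ (c : I) (φ : C(X, I)), J (tMul T c φ) = T.op c (J φ))) ↔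
    (∃! ν : Capacity X, ∀ φ : C(X, I),
      IsGreatest {y | ∃ t : I, y = T.op (ν.ν (superLevel φ t)) t} (J φ)) := by
  constructor
  · rintro ⟨hN, hM, hH⟩
    exact ⟨inducedCapacity hN hM hH, represents_inducedCapacity hN hM hH,
      fun ν hν => Capacity.ext (funext (Represents.ν_eq_capacityOf hν))⟩
  · rintro ⟨ν, hν, -⟩
    exact ⟨Represents.map_one hν, Represents.comonotoneMaxitive hν,
      Represents.tnormHomogeneous hν⟩

/-- Characterization of t-normed integrals: a functional on `C(X,[0,1])` is normed,
comonotonically maxitive and `∗`-homogeneous iff it is the t-normed integral with respect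
to a unique upper-semicontinuous capacity (monotonicity need not be assumed). -/
theorem tnormed_integral_characterization {X : Type*} [TopologicalSpace X] [CompactSpace X]
    [T2Space X] [Nonempty X] (T : Tnorm) (J : C(X, I) → I) :
    (J (ContinuousMap.const X 1) = 1 ∧
     (∀ φ ψ : C(X, I), Comonotone (⇑φ) (⇑ψ) → J (fSup φ ψ) = J φ ⊔ J ψ) ∧
     (∀ (c : I) (φ : C(X, I)), J (tMul T c φ) = T.op c (J φ))) ↔
    (∃! ν : Capacity X, ∀ φ : C(X, I),
      IsGreatest {y | ∃ t : I, y = T.op (ν.ν (superLevel φ t)) t} (J φ)) :=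
  tnormed_integral_characterization_general T J
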